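/- For the monic skew orthogonal polynomials p_{2n}(z) = z^{2n}, p_{2n+1}(z) = z^{2n+1} − 2n z^{2n−1} of the real Ginibre ensemble (τ = 0 case), the summation kernel S_0^c(w,z) := Σ_{j=1}^{N} p_{j-1}(w) q_{j-1}(z) / u_{⌊(j-1)/2⌋}, with q_{2j-2} = −p_{2j-1}, q_{2j-1} = p_{2j-2}, and u_n = (2n)! · 2√(2π), simplifies to S_0^c(w,z) = ((w − z)/(2√(2π))) Σ_{j=0}^{N-2} (wz)^j / j! for even N. -/

import Mathlib

/-!
Pairing the terms `j = 2k` and `j = 2k + 1` of the kernel, the cross terms cancel and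
`p_{2k}(w) q_{2k}(z) + p_{2k+1}(w) q_{2k+1}(z) = (w - z) ((wz)^{2k} + 2k (wz)^{2k-1})`.
Dividing by `u_k = (2k)! · 2√(2π)` turns this into `(w - z)/(2√(2π))` times the two consecutive
exponential-series terms `(wz)^{2k-1}/(2k-1)! + (wz)^{2k}/(2k)!`, so the kernel telescopes into a
partial sum of `exp(wz)`.
-/

open Complex

/-- The monic skew orthogonal polynomials of the real Ginibre ensemble:
  `p_{2n}(z) = z^{2n}`, `p_{2n+1}(z) = z^{2n+1} - 2n z^{2n-1}`. -/
noncomputable def p (n : ℕ) (z : ℂ) : ℂ :=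
  if n % 2 = 0 then z ^ n else z ^ n - ((n : ℂ) - 1) * z ^ (n - 2)

/-- `q_{2j-2} = -p_{2j-1}`, `q_{2j-1} = p_{2j-2}`. -/
noncomputable def q (n : ℕ) (z : ℂ) : ℂ :=
  if n % 2 = 0 then -p (n + 1) z else p (n - 1) z

/-- The normalizations `u_n = (2n)! · 2√(2π)`. -/
noncomputable def u (n : ℕ) : ℝ :=
  ((2 * n).factorial : ℝ) * 2 * Real.sqrt (2 * Real.pi)

/-- The summation kernel `S_0^c(w,z) = Σ_{j=1}^N p_{j-1}(w) q_{j-1}(z) / u_{⌊(j-1)/2⌋}`. -/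
noncomputable def S0c (N : ℕ) (w z : ℂ) : ℂ :=
  ∑ j ∈ Finset.range N, p j w * q j z / (u (j / 2) : ℂ)

section Kernel

variable (w z : ℂ)

lemma p_two_mul (k : ℕ) : p (2 * k) w = w ^ (2 * k) := by
  simp [p]

lemma p_two_mul_add_one (k : ℕ) :
    p (2 * k + 1) w = w ^ (2 * k + 1) - 2 * k * w ^ (2 * k - 1) := by
  rw [p, if_neg (by omega), show 2 * k + 1 - 2 = 2 * k - 1 by omega]
  push_cast
  ring

lemma q_two_mul (k : ℕ) : q (2 * k) z = -p (2 * k + 1) z := by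
  simp [q]

lemma q_two_mul_add_one (k : ℕ) : q (2 * k + 1) z = p (2 * k) z := by
  simp [q, Nat.add_mod]

lemma p_mul_q_add_p_mul_q (k : ℕ) :
    p (2 * k) w * q (2 * k) z + p (2 * k + 1) w * q (2 * k + 1) z =
      (w - z) * ((w * z) ^ (2 * k) + 2 * k * (w * z) ^ (2 * k - 1)) := by
  rw [q_two_mul, q_two_mul_add_one, p_two_mul_add_one, p_two_mul_add_one, p_two_mul, p_two_mul]
  obtain _ | k := k
  · simp
    ring
  · rw [show 2 * (k + 1) - 1 = 2 * k + 1 by omega]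
    ring

lemma S0c_two_mul_succ (m : ℕ) :
    S0c (2 * (m + 1)) w z = S0c (2 * m) w z +
      (p (2 * m) w * q (2 * m) z + p (2 * m + 1) w * q (2 * m + 1) z) / (u m : ℂ) := by
  rw [S0c, S0c, show 2 * (m + 1) = 2 * m + 1 + 1 by ring, Finset.sum_range_succ,
    Finset.sum_range_succ, show (2 * m + 1) / 2 = m by omega, show 2 * m / 2 = m by omega,
    add_div, add_assoc]

lemma p_mul_q_add_p_mul_q_div_u (k : ℕ) :
    (p (2 * (k + 1)) w * q (2 * (k + 1)) z + p (2 * (k + 1) + 1) w * q (2 * (k + 1) + 1) z) /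
        (u (k + 1) : ℂ) =
      (w - z) / (2 * (Real.sqrt (2 * Real.pi) : ℂ)) *
        ((w * z) ^ (2 * k + 1) / ((2 * k + 1).factorial : ℂ) +
          (w * z) ^ (2 * (k + 1)) / ((2 * (k + 1)).factorial : ℂ)) := by
  have hsqrt : (Real.sqrt (2 * Real.pi) : ℂ) ≠ 0 := by
    exact_mod_cast (Real.sqrt_pos.mpr (by positivity)).ne'
  have hfact : ((2 * (k + 1)).factorial : ℂ) = (2 * (k + 1)) * ((2 * k + 1).factorial : ℂ) := by
    rw [show 2 * (k + 1) = 2 * k + 1 + 1 by ring, Nat.factorial_succ]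
    push_cast
    ring
  have hk : (2 * (k + 1) : ℂ) ≠ 0 := by exact_mod_cast (show 2 * (k + 1) ≠ 0 by omega)
  rw [p_mul_q_add_p_mul_q, show 2 * (k + 1) - 1 = 2 * k + 1 by omega, u]
  push_cast
  rw [hfact]
  field_simp
  ring

lemma S0c_two_mul_succ_eq (m : ℕ) :
    S0c (2 * (m + 1)) w z =
      (w - z) / (2 * (Real.sqrt (2 * Real.pi) : ℂ)) *
        ∑ j ∈ Finset.range (2 * m + 1), (w * z) ^ j / (j.factorial : ℂ) := by
  induction m with
  | zero =>
    rw [S0c_two_mul_succ, p_mul_q_add_p_mul_q]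
    simp [S0c, u]
  | succ m ih =>
    rw [S0c_two_mul_succ, ih, p_mul_q_add_p_mul_q_div_u,
      show 2 * (m + 1) + 1 = 2 * m + 1 + 1 + 1 by ring,
      Finset.sum_range_succ _ (2 * m + 1 + 1), Finset.sum_range_succ _ (2 * m + 1),
      show 2 * m + 1 + 1 = 2 * (m + 1) by ring]
    ring

end Kernel

theorem S0c_simplification_general (N : ℕ) (hN : Even N) (w z : ℂ) :
    S0c N w z =
      (w - z) / (2 * (Real.sqrt (2 * Real.pi) : ℂ)) *
        ∑ j ∈ Finset.range (N - 1), (w * z) ^ j / (j.factorial : ℂ) := by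
  obtain ⟨k, rfl⟩ := hN
  obtain _ | m := k
  · simp [S0c]
  · rw [show m + 1 + (m + 1) = 2 * (m + 1) by ring, show 2 * (m + 1) - 1 = 2 * m + 1 by omega]
    exact S0c_two_mul_succ_eq w z m

/-- for even `N`, the kernel simplifies to
  `S_0^c(w,z) = ((w-z)/(2√(2π))) Σ_{j=0}^{N-2} (wz)^j / j!`. -/
theorem S0c_simplification (N : ℕ) (hN : Even N) (hNpos : 0 < N) (w z : ℂ) :
    S0c N w z =
      (w - z) / (2 * (Real.sqrt (2 * Real.pi) : ℂ)) *
        ∑ j ∈ Finset.range (N - 1), (w * z) ^ j / (j.factorial : ℂ) :=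
  S0c_simplification_general N hN w z
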